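/- (Pathwise version of Proposition: nonemptiness of the feasible set for the Wong–Zakai–perturbed optimal control problem.) Let G = (V,E) be a finite, connected, undirected graph with no self-loops, V = {1,…,N}, N ≥ 2, with all edge weights equal to 1. For any ρ^a, ρ^b ∈ P(G), any Σ ∈ ℝ^N, and any continuous piecewise-linear function w : [0,1] → ℝ, the feasible set C_F(ρ^a, ρ^b) is nonempty; moreover it contains a pair (ρ, m) with finite action A(ρ, m) < ∞. -/

import Mathlib

open scoped BigOperators ENNReal
open MeasureTheory

noncomputable section

/-- Density-dependent edge weight `θ_ij(ρ) = (ρ_i + ρ_j)/2`. -/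
def thetaA {N : ℕ} (ρ : Fin N → ℝ) (i j : Fin N) : ℝ := (ρ i + ρ j) / 2

/-- The cost function `L : ℝ × ℝ → [0,∞]`, `L(x,y) = y²/x` for `x > 0`,
`L(0,0) = 0`, and `L(x,y) = ∞` otherwise. -/
def Lcost (x y : ℝ) : ℝ≥0∞ :=
  if 0 < x then ENNReal.ofReal (y ^ 2 / x)
  else if x = 0 ∧ y = 0 then 0 else ⊤

/-- Membership in the probability simplex `P(G)`. -/
def ProbVec {N : ℕ} (ρ : Fin N → ℝ) : Prop := (∀ i, 0 ≤ ρ i) ∧ ∑ i, ρ i = 1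

/-- A vector field on the graph: a skew-symmetric matrix supported on edges. -/
def VecField {N : ℕ} (E : Fin N → Fin N → Prop) (m : Fin N → Fin N → ℝ) : Prop :=
  (∀ i j, m i j = - m j i) ∧ (∀ i j, ¬ E i j → m i j = 0)

/-- `w` is continuous and piecewise linear on `[0,1]` with a.e. derivative `wd`:
there is a partition `0 = t₀ < t₁ < ⋯ = 1` on whose pieces `w` is affine with
slope `c k`, and `wd` equals `c k` on `[t_k, t_{k+1})`. -/
def IsPWL (w wd : ℝ → ℝ) : Prop :=
  ∃ (K : ℕ) (t : Fin (K + 2) → ℝ) (c : Fin (K + 1) → ℝ),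
    StrictMono t ∧ t 0 = 0 ∧ t (Fin.last (K + 1)) = 1 ∧
    (∀ k : Fin (K + 1), ∀ s ∈ Set.Icc (t k.castSucc) (t k.succ),
      w s = w (t k.castSucc) + c k * (s - t k.castSucc)) ∧
    (∀ k : Fin (K + 1), ∀ s ∈ Set.Ico (t k.castSucc) (t k.succ), wd s = c k)

/-- The action `A(ρ,m) = ∫₀¹ (1/4) ∑_{(i,j)∈E} L(θ_ij(ρ(t)), m_ij(t)) dt`
(sum over ordered pairs), valued in `[0,∞]`. -/
def action {N : ℕ} (E : Fin N → Fin N → Prop) [DecidableRel E]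
    (ρ : ℝ → Fin N → ℝ) (m : ℝ → Fin N → Fin N → ℝ) : ℝ≥0∞ :=
  ∫⁻ t in Set.Icc (0 : ℝ) 1,
    (1 / 4) * ∑ i, ∑ j, (if E i j then Lcost (thetaA (ρ t) i j) (m t i j) else 0)

/-- The feasible set `C_F(ρ^a,ρ^b)` of the Wong–Zakai perturbed optimal control
problem: `ρ` is an absolutely continuous curve in `P(G)` joining `ρ^a` to `ρ^b`,
`m` is an `L²` field of skew-symmetric matrices supported on edges, and for a.e. `t`
and all `i`: `ρ̇_i + ∑_{j∈N(i)} m_ij + ∑_{j∈N(i)} (Σ_j − Σ_i) θ_ij(ρ) ẇ = 0`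
(stated in integrated form). -/
def Feasible {N : ℕ} (E : Fin N → Fin N → Prop) [DecidableRel E]
    (Sg : Fin N → ℝ) (wd : ℝ → ℝ) (ρa ρb : Fin N → ℝ)
    (ρ : ℝ → Fin N → ℝ) (m : ℝ → Fin N → Fin N → ℝ) : Prop :=
  ContinuousOn ρ (Set.Icc 0 1) ∧
  (∀ t ∈ Set.Icc (0 : ℝ) 1, ProbVec (ρ t)) ∧
  ρ 0 = ρa ∧ ρ 1 = ρb ∧
  (∀ t, VecField E (m t)) ∧
  (∀ i j, MemLp (fun t => m t i j) 2 (volume.restrict (Set.Icc (0 : ℝ) 1))) ∧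
  (∀ i, IntervalIntegrable
    (fun s => ∑ j, (if E i j then m s i j + (Sg j - Sg i) * thetaA (ρ s) i j * wd s else 0))
    volume 0 1) ∧
  (∀ i, ∀ t ∈ Set.Icc (0 : ℝ) 1,
    ρ t i = ρa i - ∫ s in (0 : ℝ)..t,
      ∑ j, (if E i j then m s i j + (Sg j - Sg i) * thetaA (ρ s) i j * wd s else 0))

/-! ### Auxiliary constructions -/

/-- A unit flow from `a` to `b` exists along any `ReflTransGen`-path. -/
lemma flow_exists {N : ℕ} (E : Fin N → Fin N → Prop) [DecidableRel E]
    (hEsymm : ∀ i j, E i j ↔ E j i) (hEirr : ∀ i, ¬ E i i)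
    {a b : Fin N} (h : Relation.ReflTransGen (fun x y => E x y) a b) :
    ∃ F : Fin N → Fin N → ℝ, (∀ i j, F i j = - F j i) ∧ (∀ i j, ¬ E i j → F i j = 0) ∧
      ∀ i, (∑ j, if E i j then F i j else 0)
        = (if i = a then 1 else 0) - (if i = b then 1 else 0) := by
  induction h with
  | refl =>
    refine ⟨fun _ _ => 0, by simp, by simp, fun i => by simp⟩
  | @tail b' c hab hE ih =>
    obtain ⟨F, hskew, hsupp, hdiv⟩ := ih
    have hbc : b' ≠ c := fun h => hEirr c (h ▸ hE)
    set G : Fin N → Fin N → ℝ := fun i j =>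
      if i = b' ∧ j = c then 1 else if i = c ∧ j = b' then -1 else 0 with hG
    have hGskew : ∀ i j, G i j = - G j i := by
      intro i j
      by_cases h1 : i = b' ∧ j = c
      · simp [hG, h1.1, h1.2, hbc, hbc.symm]
      · by_cases h2 : i = c ∧ j = b'
        · simp [hG, h2.1, h2.2, hbc, hbc.symm]
        · have h1' : ¬ (j = b' ∧ i = c) := fun hh => h2 ⟨hh.2, hh.1⟩
          have h2' : ¬ (j = c ∧ i = b') := fun hh => h1 ⟨hh.2, hh.1⟩
          simp [hG, h1, h2, h1', h2']
    have hGsupp : ∀ i j, ¬ E i j → G i j = 0 := by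
      intro i j hij
      by_cases h1 : i = b' ∧ j = c
      · exact absurd (h1.1 ▸ h1.2 ▸ hE) hij
      · by_cases h2 : i = c ∧ j = b'
        · exact absurd (h2.1 ▸ h2.2 ▸ (hEsymm b' c).mp hE) hij
        · simp [hG, h1, h2]
    have hGdiv : ∀ i, (∑ j, if E i j then G i j else 0)
        = (if i = b' then 1 else 0) - (if i = c then 1 else 0) := by
      intro i
      have hterm : ∀ j, (if E i j then G i j else 0)
          = (if j = c then (if i = b' then (1:ℝ) else 0) else 0)
            - (if j = b' then (if i = c then (1:ℝ) else 0) else 0) := by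
        intro j
        by_cases h1 : i = b' ∧ j = c
        · rw [h1.1, h1.2]; simp [hG, hbc, hE]
        · by_cases h2 : i = c ∧ j = b'
          · rw [h2.1, h2.2]; simp [hG, hbc, hbc.symm, (hEsymm b' c).mp hE]
          · have hG0 : G i j = 0 := by
              simp [hG, h1, h2]
            rw [hG0]
            have e1 : (if j = c then (if i = b' then (1:ℝ) else 0) else 0) = 0 := by
              by_cases hjc : j = c
              · have hib : i ≠ b' := fun hib => h1 ⟨hib, hjc⟩
                simp [hjc, hib]
              · simp [hjc]
            have e2 : (if j = b' then (if i = c then (1:ℝ) else 0) else 0) = 0 := by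
              by_cases hjb : j = b'
              · have hic : i ≠ c := fun hic => h2 ⟨hic, hjb⟩
                simp [hjb, hic]
              · simp [hjb]
            rw [e1, e2]; simp
      rw [Finset.sum_congr rfl (fun j _ => hterm j), Finset.sum_sub_distrib]
      simp
    refine ⟨fun i j => F i j + G i j,
      fun i j => by show F i j + G i j = -(F j i + G j i); rw [hskew, hGskew]; ring,
      fun i j hij => by
        show F i j + G i j = 0; rw [hsupp _ _ hij, hGsupp _ _ hij]; ring,
      fun i => ?_⟩
    have : ∀ j, (if E i j then F i j + G i j else 0)
        = (if E i j then F i j else 0) + (if E i j then G i j else 0) := by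
      intro j; by_cases hij : E i j <;> simp [hij]
    rw [Finset.sum_congr rfl (fun j _ => this j), Finset.sum_add_distrib, hdiv, hGdiv]
    ring

def aco (t : ℝ) : ℝ := (1-t)^3*(1+3*t)
def bco (t : ℝ) : ℝ := t^3*(4-3*t)
def cco (t : ℝ) : ℝ := 6*t^2*(1-t)^2

/-- The interpolating path from `ρa` to `ρb` through the uniform measure. -/
def rhoP {N : ℕ} (ρa ρb : Fin N → ℝ) (t : ℝ) (i : Fin N) : ℝ :=
  aco t * ρa i + bco t * ρb i + cco t / N

/-- Its time derivative. -/
def vP {N : ℕ} (ρa ρb : Fin N → ℝ) (t : ℝ) (i : Fin N) : ℝ :=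
  (-12*t*(1-t)^2) * ρa i + (12*t^2*(1-t)) * ρb i + (12*t*(1-t)*(1-2*t)) / N

lemma hasDerivAt_rhoP {N : ℕ} (ρa ρb : Fin N → ℝ) (i : Fin N) (t : ℝ) :
    HasDerivAt (fun s => rhoP ρa ρb s i) (vP ρa ρb t i) t := by
  have h : HasDerivAt (fun s : ℝ =>
      ((1-s)^3*(1+3*s)) * ρa i + (s^3*(4-3*s)) * ρb i + (6*s^2*(1-s)^2) * (N:ℝ)⁻¹)
      (vP ρa ρb t i) t := by
    have h1 : HasDerivAt (fun s : ℝ => (1-s)^3*(1+3*s)) (-12*t*(1-t)^2) t := by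
      have := (((hasDerivAt_id t).const_sub 1).pow 3).mul
        (((hasDerivAt_id t).const_mul 3).const_add 1)
      convert this using 1
      · rfl
      · rfl
      · rfl
      · simp; ring
    have h2 : HasDerivAt (fun s : ℝ => s^3*(4-3*s)) (12*t^2*(1-t)) t := by
      have := ((hasDerivAt_pow 3 t)).mul (((hasDerivAt_id t).const_mul 3).const_sub 4)
      convert this using 1
      · rfl
      · rfl
      · rfl
      · simp; ring
    have h3 : HasDerivAt (fun s : ℝ => 6*s^2*(1-s)^2) (12*t*(1-t)*(1-2*t)) t := by
      have := (((hasDerivAt_pow 2 t).const_mul 6)).mul (((hasDerivAt_id t).const_sub 1).pow 2)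
      convert this using 1
      · rfl
      · rfl
      · rfl
      · simp; ring
    have hsum := ((h1.mul_const (ρa i)).add (h2.mul_const (ρb i))).add (h3.mul_const (N:ℝ)⁻¹)
    have hv : vP ρa ρb t i
        = -12*t*(1-t)^2 * ρa i + 12*t^2*(1-t) * ρb i + 12*t*(1-t)*(1-2*t) * (N:ℝ)⁻¹ := by
      unfold vP; ring
    rw [hv]; exact hsum
  have hfun : (fun s => rhoP ρa ρb s i) = (fun s : ℝ =>
      ((1-s)^3*(1+3*s)) * ρa i + (s^3*(4-3*s)) * ρb i + (6*s^2*(1-s)^2) * (N:ℝ)⁻¹) := by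
    funext s; unfold rhoP aco bco cco; rw [div_eq_mul_inv]
  rw [hfun]; exact h

lemma continuous_vP {N : ℕ} (ρa ρb : Fin N → ℝ) (i : Fin N) :
    Continuous (fun s => vP ρa ρb s i) := by
  unfold vP; fun_prop

lemma continuous_rhoP {N : ℕ} (ρa ρb : Fin N → ℝ) (i : Fin N) :
    Continuous (fun s => rhoP ρa ρb s i) := by
  unfold rhoP aco bco cco; fun_prop

lemma vP_abs_le {N : ℕ} {ρa ρb : Fin N → ℝ} (ha : ∀ i, 0 ≤ ρa i) (ha1 : ∀ i, ρa i ≤ 1)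
    (hb : ∀ i, 0 ≤ ρb i) (hb1 : ∀ i, ρb i ≤ 1) (i : Fin N) {t : ℝ}
    (ht : t ∈ Set.Icc (0:ℝ) 1) : |vP ρa ρb t i| ≤ 36 * (t * (1-t)) := by
  obtain ⟨ht0, ht1⟩ := ht
  have h1t : 0 ≤ 1 - t := by linarith
  have hNinv : (0:ℝ) ≤ (N:ℝ)⁻¹ := by positivity
  have hNinv1 : (N:ℝ)⁻¹ ≤ 1 := by
    rcases Nat.eq_zero_or_pos N with h | h
    · simp [h]
    · rw [inv_le_one_iff₀]; right; exact_mod_cast h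
  have e1 : |(-12*t*(1-t)^2) * ρa i| ≤ 12 * (t*(1-t)) := by
    rw [abs_mul]
    have habs : |(-12*t*(1-t)^2)| = 12*t*(1-t)^2 := by
      rw [abs_of_nonpos (by nlinarith [mul_nonneg ht0 (sq_nonneg (1-t))] :
        (-12*t*(1-t)^2) ≤ 0)]; ring
    rw [habs, abs_of_nonneg (ha i)]
    have key : (0:ℝ) ≤ 1 - (1-t) * ρa i := by nlinarith [ha i, ha1 i]
    nlinarith [mul_nonneg (mul_nonneg ht0 h1t) key]
  have e2 : |(12*t^2*(1-t)) * ρb i| ≤ 12 * (t*(1-t)) := by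
    rw [abs_mul]
    have habs : |(12*t^2*(1-t))| = 12*t^2*(1-t) :=
      abs_of_nonneg (by nlinarith [mul_nonneg (mul_nonneg ht0 ht0) h1t])
    rw [habs, abs_of_nonneg (hb i)]
    have key : (0:ℝ) ≤ 1 - t * ρb i := by nlinarith [hb i, hb1 i]
    nlinarith [mul_nonneg (mul_nonneg ht0 h1t) key]
  have e3 : |(12*t*(1-t)*(1-2*t)) / N| ≤ 12 * (t*(1-t)) := by
    rw [div_eq_mul_inv, abs_mul]
    have h2 : |(12*t*(1-t)*(1-2*t))| ≤ 12*(t*(1-t)) := by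
      rw [abs_mul]
      have : |(12*t*(1-t))| = 12*(t*(1-t)) := by
        rw [abs_of_nonneg (by nlinarith)]; ring
      rw [this]
      have : |1-2*t| ≤ 1 := by rw [abs_le]; constructor <;> linarith
      nlinarith [abs_nonneg (1-2*t), mul_nonneg (mul_nonneg (by norm_num : (0:ℝ) ≤ 12) ht0) h1t]
    calc |(12*t*(1-t)*(1-2*t))| * |(N:ℝ)⁻¹| ≤ |(12*t*(1-t)*(1-2*t))| * 1 := by
          apply mul_le_mul_of_nonneg_left _ (abs_nonneg _)
          rw [abs_of_nonneg hNinv]; exact hNinv1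
      _ ≤ 12*(t*(1-t)) := by rw [mul_one]; exact h2
  calc |vP ρa ρb t i| ≤ |(-12*t*(1-t)^2) * ρa i| + |(12*t^2*(1-t)) * ρb i|
        + |(12*t*(1-t)*(1-2*t)) / N| := by
        unfold vP; exact (abs_add_le _ _).trans (by gcongr; exact abs_add_le _ _)
    _ ≤ 36 * (t*(1-t)) := by linarith

lemma abc_sum (t : ℝ) : aco t + bco t + cco t = 1 := by unfold aco bco cco; ring

lemma aco_nonneg {t : ℝ} (h0 : 0 ≤ t) (h1 : t ≤ 1) : 0 ≤ aco t := by
  unfold aco; nlinarith [pow_nonneg (by linarith : (0:ℝ) ≤ 1 - t) 3]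

lemma bco_nonneg {t : ℝ} (h0 : 0 ≤ t) (h1 : t ≤ 1) : 0 ≤ bco t := by
  unfold bco; nlinarith [pow_nonneg h0 3]

lemma cco_nonneg (t : ℝ) : 0 ≤ cco t := by unfold cco; positivity

lemma rhoP_nonneg {N : ℕ} {ρa ρb : Fin N → ℝ} (ha : ∀ i, 0 ≤ ρa i) (hb : ∀ i, 0 ≤ ρb i)
    {t : ℝ} (h0 : 0 ≤ t) (h1 : t ≤ 1) (i : Fin N) : 0 ≤ rhoP ρa ρb t i := by
  unfold rhoP
  have hc : (0:ℝ) ≤ cco t / N := div_nonneg (cco_nonneg t) (Nat.cast_nonneg N)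
  nlinarith [mul_nonneg (aco_nonneg h0 h1) (ha i), mul_nonneg (bco_nonneg h0 h1) (hb i)]

lemma rhoP_ge {N : ℕ} {ρa ρb : Fin N → ℝ} (ha : ∀ i, 0 ≤ ρa i) (hb : ∀ i, 0 ≤ ρb i)
    {t : ℝ} (h0 : 0 ≤ t) (h1 : t ≤ 1) (i : Fin N) : cco t / N ≤ rhoP ρa ρb t i := by
  unfold rhoP
  nlinarith [mul_nonneg (aco_nonneg h0 h1) (ha i), mul_nonneg (bco_nonneg h0 h1) (hb i)]

lemma rhoP_sum {N : ℕ} (hN : 0 < N) {ρa ρb : Fin N → ℝ}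
    (ha : ∑ i, ρa i = 1) (hb : ∑ i, ρb i = 1) (t : ℝ) : ∑ i, rhoP ρa ρb t i = 1 := by
  have hNne : (N:ℝ) ≠ 0 := Nat.cast_ne_zero.mpr hN.ne'
  unfold rhoP
  rw [Finset.sum_add_distrib, Finset.sum_add_distrib, ← Finset.mul_sum, ← Finset.mul_sum,
    ha, hb, Finset.sum_const]
  simp only [Finset.card_univ, Fintype.card_fin, nsmul_eq_mul]
  field_simp
  linarith [abc_sum t]

lemma vP_sum {N : ℕ} (hN : 0 < N) {ρa ρb : Fin N → ℝ}
    (ha : ∑ i, ρa i = 1) (hb : ∑ i, ρb i = 1) (t : ℝ) : ∑ i, vP ρa ρb t i = 0 := by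
  have hNne : (N:ℝ) ≠ 0 := Nat.cast_ne_zero.mpr hN.ne'
  unfold vP
  rw [Finset.sum_add_distrib, Finset.sum_add_distrib, ← Finset.mul_sum, ← Finset.mul_sum,
    ha, hb, Finset.sum_const]
  simp only [Finset.card_univ, Fintype.card_fin, nsmul_eq_mul]
  field_simp
  ring

lemma rhoP_zero {N : ℕ} (ρa ρb : Fin N → ℝ) : rhoP ρa ρb 0 = ρa := by
  funext i; unfold rhoP aco bco cco; norm_num

lemma rhoP_one {N : ℕ} (ρa ρb : Fin N → ℝ) : rhoP ρa ρb 1 = ρb := by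
  funext i; unfold rhoP aco bco cco; norm_num

lemma rhoP_le_one {N : ℕ} (hN : 0 < N) {ρa ρb : Fin N → ℝ}
    (ha : ∀ i, 0 ≤ ρa i) (hb : ∀ i, 0 ≤ ρb i)
    (hsa : ∑ i, ρa i = 1) (hsb : ∑ i, ρb i = 1)
    {t : ℝ} (h0 : 0 ≤ t) (h1 : t ≤ 1) (i : Fin N) : rhoP ρa ρb t i ≤ 1 := by
  have hsum := rhoP_sum hN hsa hsb (ρa := ρa) (ρb := ρb) t
  have hnn := rhoP_nonneg ha hb h0 h1
  calc rhoP ρa ρb t i ≤ ∑ j, rhoP ρa ρb t j :=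
        Finset.single_le_sum (fun j _ => hnn j) (Finset.mem_univ i)
    _ = 1 := hsum

lemma wd_props {w wd : ℝ → ℝ} (hw : IsPWL w wd) :
    ∃ (g : ℝ → ℝ) (B : ℝ), Measurable g ∧
      (∀ᵐ s ∂(volume.restrict (Set.Icc (0:ℝ) 1)), wd s = g s ∧ |wd s| ≤ B) := by
  obtain ⟨K, t, c, hmono, h0, hlast, -, hwd⟩ := hw
  set g : ℝ → ℝ := fun s =>
    ∑ k : Fin (K+1), Set.indicator (Set.Ico (t k.castSucc) (t k.succ)) (fun _ => c k) s
    with hg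
  have hgmeas : Measurable g := by
    apply Finset.measurable_sum
    intro k _
    exact (measurable_const).indicator measurableSet_Ico
  refine ⟨g, ∑ k, |c k|, hgmeas, ?_⟩
  rw [ae_restrict_iff' measurableSet_Icc]
  have hne1 : ∀ᵐ s : ℝ ∂volume, s ≠ 1 := by
    have : (volume : Measure ℝ) {(1:ℝ)} = 0 := measure_singleton 1
    exact measure_eq_zero_iff_ae_notMem.mp this
  filter_upwards [hne1] with s hs1 hsIcc
  have hs0 : (0:ℝ) ≤ s := hsIcc.1
  have hslt : s < 1 := lt_of_le_of_ne hsIcc.2 hs1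
  have hcover : ∃ k : Fin (K+1), t k.castSucc ≤ s ∧ s < t k.succ := by
    classical
    set S : Finset (Fin (K+2)) := Finset.univ.filter (fun j => t j ≤ s) with hS
    have h0S : (0 : Fin (K+2)) ∈ S := by
      simp [hS, h0, hs0]
    have hSne : S.Nonempty := ⟨0, h0S⟩
    set k' := S.max' hSne with hk'
    have hk'S : k' ∈ S := S.max'_mem hSne
    have hk'le : t k' ≤ s := by simpa [hS] using hk'S
    have hk'ne : k' ≠ Fin.last (K+1) := by
      intro h
      rw [h, hlast] at hk'le
      linarith
    obtain ⟨k, hk⟩ := Fin.exists_castSucc_eq.mpr hk'ne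
    refine ⟨k, by rw [hk]; exact hk'le, ?_⟩
    by_contra hcon
    push_neg at hcon
    have : k.succ ∈ S := by simp [hS, hcon]
    have hle := S.le_max' _ this
    rw [← hk'] at hle
    rw [← hk] at hle
    exact absurd hle (not_le.mpr (Fin.castSucc_lt_succ : k.castSucc < k.succ))
  obtain ⟨k, hk1, hk2⟩ := hcover
  have hwds : wd s = c k := hwd k s ⟨hk1, hk2⟩
  have hdisj : ∀ l : Fin (K+1), l ≠ k → s ∉ Set.Ico (t l.castSucc) (t l.succ) := by
    intro l hlk hsl
    rcases lt_or_gt_of_ne hlk with h | h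
    · have : l.succ ≤ k.castSucc := by
        rw [← Fin.castSucc_lt_iff_succ_le]
        exact_mod_cast Fin.castSucc_lt_castSucc_iff.mpr h
      have := hmono.monotone this
      linarith [hsl.2]
    · have : k.succ ≤ l.castSucc := by
        rw [← Fin.castSucc_lt_iff_succ_le]
        exact_mod_cast Fin.castSucc_lt_castSucc_iff.mpr h
      have := hmono.monotone this
      linarith [hsl.1]
  have hgs : g s = c k := by
    show (∑ l : Fin (K+1),
      Set.indicator (Set.Ico (t l.castSucc) (t l.succ)) (fun _ => c l) s) = c k
    rw [Finset.sum_eq_single k]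
    · simp [Set.indicator_of_mem (Set.mem_Ico.mpr ⟨hk1, hk2⟩)]
    · intro l _ hlk
      exact Set.indicator_of_notMem (hdisj l hlk) _
    · intro h; exact absurd (Finset.mem_univ k) h
  refine ⟨by rw [hwds, hgs], ?_⟩
  rw [hwds]
  exact Finset.single_le_sum (fun l _ => abs_nonneg (c l)) (Finset.mem_univ k)

lemma div_sum {N : ℕ} (E : Fin N → Fin N → Prop) [DecidableRel E] {v0 : Fin N}
    {F : Fin N → Fin N → Fin N → ℝ}
    (hFdiv : ∀ k i, (∑ j, if E i j then F k i j else 0)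
      = (if i = k then 1 else 0) - (if i = v0 then 1 else 0))
    (v : Fin N → ℝ) (hv : ∑ k, v k = 0) (i : Fin N) :
    (∑ j, if E i j then (∑ k, (- v k) * F k i j) else 0) = - v i := by
  have h1 : ∀ j, (if E i j then (∑ k, (- v k) * F k i j) else 0)
      = ∑ k, (- v k) * (if E i j then F k i j else 0) := by
    intro j; by_cases h : E i j <;> simp [h]
  rw [Finset.sum_congr rfl (fun j _ => h1 j), Finset.sum_comm]
  have h2 : ∀ k, (∑ j, (- v k) * (if E i j then F k i j else 0))
      = (- v k) * ((if i = k then 1 else 0) - (if i = v0 then (1:ℝ) else 0)) := by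
    intro k; rw [← Finset.mul_sum, hFdiv k i]
  rw [Finset.sum_congr rfl (fun k _ => h2 k)]
  have h3 : (∑ k, (- v k) * ((if i = k then 1 else 0) - (if i = v0 then (1:ℝ) else 0)))
      = (∑ k, (- v k) * (if i = k then 1 else 0)) - (∑ k, - v k) * (if i = v0 then 1 else 0) := by
    rw [Finset.sum_mul, ← Finset.sum_sub_distrib]
    exact Finset.sum_congr rfl (fun k _ => by ring)
  rw [h3]
  have e1 : (∑ k, (- v k) * (if i = k then (1:ℝ) else 0)) = - v i := by
    rw [Finset.sum_eq_single i]
    · simp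
    · intro k _ hk; simp [Ne.symm hk]
    · intro h; exact absurd (Finset.mem_univ i) h
  have e2 : (∑ k, - v k) = (0:ℝ) := by
    rw [Finset.sum_neg_distrib, hv, neg_zero]
  rw [e1, e2]; ring

lemma sum_neg_mul_abs_le {N : ℕ} (v : Fin N → ℝ) (Fij : Fin N → ℝ) (M : ℝ)
    (hM : ∀ k, |v k| ≤ M) :
    |∑ k, (- v k) * Fij k| ≤ M * ∑ k, |Fij k| := by
  calc |∑ k, (- v k) * Fij k| ≤ ∑ k, |(- v k) * Fij k| := Finset.abs_sum_le_sum_abs _ _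
    _ ≤ ∑ k, M * |Fij k| := Finset.sum_le_sum (fun k _ => by
        rw [abs_mul, abs_neg]; exact mul_le_mul_of_nonneg_right (hM k) (abs_nonneg _))
    _ = M * ∑ k, |Fij k| := (Finset.mul_sum _ _ _).symm

set_option maxHeartbeats 1000000 in
/-- Nonemptiness of the feasible set for the Wong–Zakai perturbed optimal control
problem: for any endpoints in `P(G)` there is a feasible pair with finite action. -/
theorem feasible_set_nonempty_with_finite_action
    (N : ℕ) (hN : 2 ≤ N) (E : Fin N → Fin N → Prop) [DecidableRel E]
    (hEsymm : ∀ i j, E i j ↔ E j i) (hEirr : ∀ i, ¬ E i i)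
    (hconn : ∀ i j : Fin N, Relation.ReflTransGen (fun a b => E a b) i j)
    (Sg : Fin N → ℝ) (w wd : ℝ → ℝ) (hw : IsPWL w wd)
    (ρa ρb : Fin N → ℝ) (hρa : ProbVec ρa) (hρb : ProbVec ρb) :
    ∃ (ρ : ℝ → Fin N → ℝ) (m : ℝ → Fin N → Fin N → ℝ),
      Feasible E Sg wd ρa ρb ρ m ∧ action E ρ m < ⊤ := by
  classical
  have hN0 : 0 < N := lt_of_lt_of_le two_pos hN
  have hNR : (0:ℝ) < N := by exact_mod_cast hN0
  haveI : IsFiniteMeasure (volume.restrict (Set.Icc (0:ℝ) 1)) := by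
    constructor
    rw [Measure.restrict_apply_univ]
    simp [Real.volume_Icc]
  obtain ⟨ha, hsa⟩ := hρa
  obtain ⟨hb, hsb⟩ := hρb
  have ha1 : ∀ i, ρa i ≤ 1 := fun i => by
    calc ρa i ≤ ∑ j, ρa j := Finset.single_le_sum (fun j _ => ha j) (Finset.mem_univ i)
      _ = 1 := hsa
  have hb1 : ∀ i, ρb i ≤ 1 := fun i => by
    calc ρb i ≤ ∑ j, ρb j := Finset.single_le_sum (fun j _ => hb j) (Finset.mem_univ i)
      _ = 1 := hsb
  set v0 : Fin N := ⟨0, hN0⟩ with hv0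
  choose F hFskew hFsupp hFdiv using fun k => flow_exists E hEsymm hEirr (hconn k v0)
  obtain ⟨g, B, hgmeas, hae⟩ := wd_props hw
  set ρ : ℝ → Fin N → ℝ := rhoP ρa ρb with hρdef
  set n : ℝ → Fin N → Fin N → ℝ := fun t i j => ∑ k, (- vP ρa ρb t k) * F k i j with hn
  set m : ℝ → Fin N → Fin N → ℝ := fun t i j =>
    if E i j then n t i j - (Sg j - Sg i) * thetaA (ρ t) i j * wd t else 0 with hm
  -- continuity facts
  have hncont : ∀ i j, Continuous (fun t => n t i j) := by
    intro i j
    apply continuous_finset_sum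
    intro k _
    exact (continuous_vP ρa ρb k).neg.mul continuous_const
  have hθcont : ∀ i j, Continuous (fun t => thetaA (ρ t) i j) := by
    intro i j
    unfold thetaA
    exact ((continuous_rhoP ρa ρb i).add (continuous_rhoP ρa ρb j)).div_const 2
  -- key pointwise identity for the constraint integrand
  have hkey : ∀ i s, (∑ j, if E i j then
      m s i j + (Sg j - Sg i) * thetaA (ρ s) i j * wd s else 0) = - vP ρa ρb s i := by
    intro i s
    have hterm : ∀ j, (if E i j then m s i j + (Sg j - Sg i) * thetaA (ρ s) i j * wd s else 0)
        = (if E i j then (∑ k, (- vP ρa ρb s k) * F k i j) else 0) := by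
      intro j
      by_cases h : E i j
      · simp only [hm, hn, if_pos h]; ring
      · simp [h]
    rw [Finset.sum_congr rfl (fun j _ => hterm j)]
    exact div_sum E hFdiv (fun k => vP ρa ρb s k) (vP_sum hN0 hsa hsb s) i
  -- the bound on n
  have hnbound : ∀ i j, ∀ t ∈ Set.Icc (0:ℝ) 1,
      |n t i j| ≤ 36 * (t * (1-t)) * ∑ k, |F k i j| := by
    intro i j t ht
    exact sum_neg_mul_abs_le _ _ _ (fun k => vP_abs_le ha ha1 hb hb1 k ht)
  have htquarter : ∀ t : ℝ, t ∈ Set.Icc (0:ℝ) 1 → t * (1-t) ≤ 1/4 := by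
    intro t ht
    nlinarith [sq_nonneg (2*t - 1)]
  -- θ bounds
  have hθle : ∀ i j, ∀ t ∈ Set.Icc (0:ℝ) 1, thetaA (ρ t) i j ≤ 1 := by
    intro i j t ht
    have h1 := rhoP_le_one hN0 ha hb hsa hsb ht.1 ht.2 i
    have h2 := rhoP_le_one hN0 ha hb hsa hsb ht.1 ht.2 j
    simp only [hρdef, thetaA]
    linarith
  have hθnn : ∀ i j, ∀ t ∈ Set.Icc (0:ℝ) 1, 0 ≤ thetaA (ρ t) i j := by
    intro i j t ht
    have h1 := rhoP_nonneg ha hb ht.1 ht.2 i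
    have h2 := rhoP_nonneg ha hb ht.1 ht.2 j
    simp only [hρdef, thetaA]
    linarith
  have hθge : ∀ i j, ∀ t ∈ Set.Icc (0:ℝ) 1, cco t / N ≤ thetaA (ρ t) i j := by
    intro i j t ht
    have h1 := rhoP_ge ha hb ht.1 ht.2 i (ρa := ρa) (ρb := ρb)
    have h2 := rhoP_ge ha hb ht.1 ht.2 j (ρa := ρa) (ρb := ρb)
    simp only [hρdef, thetaA]
    linarith
  refine ⟨ρ, m, ⟨?_, ?_, ?_, ?_, ?_, ?_, ?_, ?_⟩, ?_⟩
  -- continuity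
  · exact (continuous_pi (fun i => continuous_rhoP ρa ρb i)).continuousOn
  -- probability vector
  · intro t ht
    exact ⟨rhoP_nonneg ha hb ht.1 ht.2, rhoP_sum hN0 hsa hsb t⟩
  -- initial condition
  · exact rhoP_zero ρa ρb
  -- final condition
  · exact rhoP_one ρa ρb
  -- vector field
  · intro t
    constructor
    · intro i j
      by_cases hij : E i j
      · have hji := (hEsymm i j).mp hij
        have hth : thetaA (ρ t) i j = thetaA (ρ t) j i := by unfold thetaA; ring
        have hns : n t i j = - n t j i := by
          simp only [hn, ← Finset.sum_neg_distrib]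
          apply Finset.sum_congr rfl
          intro k _
          rw [hFskew k i j]; ring
        show m t i j = - m t j i
        simp only [hm, if_pos hij, if_pos hji]
        rw [hns, hth]; ring
      · have hji : ¬ E j i := fun h => hij ((hEsymm i j).mpr h)
        show m t i j = - m t j i
        simp [hm, hij, hji]
    · intro i j hij
      show m t i j = 0
      simp [hm, hij]
  -- Memℒp
  · intro i j
    by_cases hij : E i j
    · have hmeq : (fun t => m t i j)
          = fun t => n t i j - (Sg j - Sg i) * thetaA (ρ t) i j * wd t := by
        funext t; simp [hm, hij]
      rw [hmeq]
      have hnice : AEStronglyMeasurable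
          (fun t => n t i j - (Sg j - Sg i) * thetaA (ρ t) i j * g t)
          (volume.restrict (Set.Icc (0:ℝ) 1)) := by
        apply AEStronglyMeasurable.sub
        · exact (hncont i j).aestronglyMeasurable
        · exact ((continuous_const.mul (hθcont i j)).aestronglyMeasurable.mul
            hgmeas.aestronglyMeasurable)
      have hasm : AEStronglyMeasurable
          (fun t => n t i j - (Sg j - Sg i) * thetaA (ρ t) i j * wd t)
          (volume.restrict (Set.Icc (0:ℝ) 1)) := by
        apply hnice.congr
        filter_upwards [hae] with t ht
        rw [ht.1]
      apply MemLp.of_bound hasm (9 * ∑ k, |F k i j| + |Sg j - Sg i| * B)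
      filter_upwards [hae, ae_restrict_mem measurableSet_Icc] with t htwd htIcc
      have h1 : |n t i j| ≤ 9 * ∑ k, |F k i j| := by
        have := hnbound i j t htIcc
        have h4 := htquarter t htIcc
        have hFnn : (0:ℝ) ≤ ∑ k, |F k i j| :=
          Finset.sum_nonneg (fun k _ => abs_nonneg _)
        nlinarith
      have h2 : |(Sg j - Sg i) * thetaA (ρ t) i j * wd t| ≤ |Sg j - Sg i| * B := by
        rw [abs_mul, abs_mul]
        have hθ : |thetaA (ρ t) i j| ≤ 1 := by
          rw [abs_of_nonneg (hθnn i j t htIcc)]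
          exact hθle i j t htIcc
        calc |Sg j - Sg i| * |thetaA (ρ t) i j| * |wd t|
            ≤ |Sg j - Sg i| * 1 * B := by
              apply mul_le_mul
              · exact mul_le_mul_of_nonneg_left hθ (abs_nonneg _)
              · exact htwd.2
              · exact abs_nonneg _
              · positivity
          _ = |Sg j - Sg i| * B := by ring
      have : ‖n t i j - (Sg j - Sg i) * thetaA (ρ t) i j * wd t‖
          ≤ |n t i j| + |(Sg j - Sg i) * thetaA (ρ t) i j * wd t| := by
        rw [Real.norm_eq_abs, sub_eq_add_neg]
        exact (abs_add_le _ _).trans_eq (by rw [abs_neg])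
      linarith
    · have hmeq : (fun t => m t i j) = fun _ => (0:ℝ) := by
        funext t; simp [hm, hij]
      rw [hmeq]
      exact memLp_const 0
  -- interval integrability of the constraint integrand
  · intro i
    have heq : (fun s => ∑ j, if E i j then
        m s i j + (Sg j - Sg i) * thetaA (ρ s) i j * wd s else 0)
        = fun s => - vP ρa ρb s i := funext (fun s => hkey i s)
    rw [heq]
    exact ((continuous_vP ρa ρb i).neg).intervalIntegrable 0 1
  -- the integrated ODE
  · intro i t ht
    have heq : (∫ s in (0:ℝ)..t, ∑ j, if E i j then
        m s i j + (Sg j - Sg i) * thetaA (ρ s) i j * wd s else 0)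
        = ∫ s in (0:ℝ)..t, - vP ρa ρb s i := by
      apply intervalIntegral.integral_congr
      intro s _
      exact hkey i s
    rw [heq, intervalIntegral.integral_neg]
    have hFTC : (∫ s in (0:ℝ)..t, vP ρa ρb s i) = rhoP ρa ρb t i - rhoP ρa ρb 0 i := by
      apply intervalIntegral.integral_eq_sub_of_hasDerivAt
      · intro x _
        exact hasDerivAt_rhoP ρa ρb i x
      · exact (continuous_vP ρa ρb i).intervalIntegrable 0 t
    rw [hFTC]
    have h0 : rhoP ρa ρb 0 i = ρa i := congrFun (rhoP_zero ρa ρb) i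
    simp only [hρdef]
    rw [h0]
    ring
  -- finite action
  · set D : Fin N → Fin N → ℝ := fun i j =>
      432 * N * (∑ k, |F k i j|)^2 + 2 * (Sg j - Sg i)^2 * B^2 with hD
    have hDnn : ∀ i j, 0 ≤ D i j := by
      intro i j
      have : (0:ℝ) ≤ (∑ k, |F k i j|)^2 := sq_nonneg _
      positivity
    set Btot : ℝ≥0∞ := (1/4) * ∑ i, ∑ j, ENNReal.ofReal (D i j) with hBtot
    have hmain : action E ρ m ≤ Btot * 1 := by
      unfold action
      have hb1' : (Btot : ℝ≥0∞) * 1 = Btot * (volume.restrict (Set.Icc (0:ℝ) 1)) Set.univ := by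
        rw [Measure.restrict_apply_univ]
        simp [Real.volume_Icc]
      rw [hb1', ← lintegral_const]
      apply lintegral_mono_ae
      have hne01 : ∀ᵐ t : ℝ ∂volume, t ≠ 0 ∧ t ≠ 1 := by
        have h0 : ∀ᵐ t : ℝ ∂volume, t ≠ 0 :=
          measure_eq_zero_iff_ae_notMem.mp (measure_singleton 0)
        have h1 : ∀ᵐ t : ℝ ∂volume, t ≠ 1 :=
          measure_eq_zero_iff_ae_notMem.mp (measure_singleton 1)
        filter_upwards [h0, h1] with t ht0 ht1
        exact ⟨ht0, ht1⟩
      filter_upwards [hae, ae_restrict_mem measurableSet_Icc, ae_restrict_of_ae hne01]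
        with t htwd htIcc htne
      have ht0 : 0 < t := lt_of_le_of_ne htIcc.1 (Ne.symm htne.1)
      have ht1 : t < 1 := lt_of_le_of_ne htIcc.2 htne.2
      rw [hBtot]
      apply mul_le_mul_right
      apply Finset.sum_le_sum
      intro i _
      apply Finset.sum_le_sum
      intro j _
      by_cases hij : E i j
      · rw [if_pos hij]
        -- positivity of θ
        have hccopos : 0 < cco t := by
          unfold cco
          have h1 : 0 < 1 - t := by linarith
          have := mul_pos (mul_pos (by norm_num : (0:ℝ) < 6) (pow_pos ht0 2)) (pow_pos h1 2)
          linarith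
        have hθpos : 0 < thetaA (ρ t) i j :=
          lt_of_lt_of_le (div_pos hccopos hNR) (hθge i j t htIcc)
        unfold Lcost
        rw [if_pos hθpos]
        apply ENNReal.ofReal_le_ofReal
        -- real estimate
        set θ := thetaA (ρ t) i j with hθdef
        set a := n t i j with hadef
        set CC := Sg j - Sg i with hCC
        have hmval : m t i j = a - CC * θ * wd t := by
          simp [hm, hij, hadef, hCC, hθdef]
        rw [hmval]
        have hsq : (a - CC * θ * wd t)^2 ≤ 2*a^2 + 2*(CC * θ * wd t)^2 := by
          nlinarith [sq_nonneg (a + CC * θ * wd t)]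
        have hdiv1 : (a - CC * θ * wd t)^2 / θ ≤ 2*a^2/θ + 2*(CC * θ * wd t)^2/θ := by
          rw [← add_div]
          exact (div_le_div_iff_of_pos_right hθpos).mpr (by linarith)
        have hterm2 : 2*(CC * θ * wd t)^2/θ = 2*CC^2*θ*(wd t)^2 := by
          field_simp
        have hbound2 : 2*CC^2*θ*(wd t)^2 ≤ 2*CC^2*B^2 := by
          have hwd2 : (wd t)^2 ≤ B^2 := by
            calc (wd t)^2 = |wd t|^2 := (sq_abs _).symm
              _ ≤ B^2 := pow_le_pow_left₀ (abs_nonneg _) htwd.2 2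
          have hθ1 : θ ≤ 1 := hθle i j t htIcc
          have h1 : θ*(wd t)^2 ≤ B^2 := by
            calc θ*(wd t)^2 ≤ 1*(wd t)^2 :=
                  mul_le_mul_of_nonneg_right hθ1 (sq_nonneg _)
              _ = (wd t)^2 := one_mul _
              _ ≤ B^2 := hwd2
          have h2 : 2*CC^2*(θ*(wd t)^2) ≤ 2*CC^2*B^2 :=
            mul_le_mul_of_nonneg_left h1 (by positivity)
          calc 2*CC^2*θ*(wd t)^2 = 2*CC^2*(θ*(wd t)^2) := by ring
            _ ≤ 2*CC^2*B^2 := h2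
        have hbound1 : 2*a^2/θ ≤ 432 * N * (∑ k, |F k i j|)^2 := by
          set CF := ∑ k, |F k i j| with hCF
          have hCFnn : 0 ≤ CF := Finset.sum_nonneg (fun k _ => abs_nonneg _)
          have hna : |a| ≤ 36 * (t * (1-t)) * CF := hnbound i j t htIcc
          have ha2 : a^2 ≤ (36 * (t * (1-t)) * CF)^2 := by
            rw [← sq_abs a]
            apply pow_le_pow_left₀ (abs_nonneg a) hna
          rw [div_le_iff₀ hθpos]
          have h3 : 2*(36*(t*(1-t))*CF)^2 = 432*CF^2*(cco t) := by unfold cco; ring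
          have h4 : (432*(N:ℝ)*CF^2)*(cco t/N) = 432*CF^2*(cco t) := by
            field_simp
          have h2 : (432*(N:ℝ)*CF^2)*(cco t/N) ≤ (432*(N:ℝ)*CF^2)*θ :=
            mul_le_mul_of_nonneg_left (hθge i j t htIcc) (by positivity)
          nlinarith [ha2]
        calc (a - CC * θ * wd t)^2 / θ
            ≤ 2*a^2/θ + 2*(CC * θ * wd t)^2/θ := hdiv1
          _ = 2*a^2/θ + 2*CC^2*θ*(wd t)^2 := by rw [hterm2]
          _ ≤ 432 * N * (∑ k, |F k i j|)^2 + 2*CC^2*B^2 := add_le_add hbound1 hbound2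
          _ = D i j := by simp only [hD, hCC]
      · rw [if_neg hij]
        exact zero_le
    have hBtotlt : Btot * 1 < ⊤ := by
      rw [mul_one, hBtot]
      apply ENNReal.mul_lt_top
      · simp
      · rw [ENNReal.sum_lt_top]
        intro i _
        rw [ENNReal.sum_lt_top]
        intro j _
        exact ENNReal.ofReal_lt_top
    exact lt_of_le_of_lt hmain hBtotlt

end
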